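/- arXiv:1809.10715 — 6 statements merged into one kernel-verified Lean document; each statement's English description precedes it below -/
import Mathlib

section
/- Let ε and ε′ be two non-parallel straight lines in ℝ², with ε′ containing the origin. Then there exist a line segment I ⊆ ε, an origin-symmetric line segment I′ ⊆ ε′ of the same length as I, and an origin-symmetric convex body K ⊆ ℝ² such that I ⊆ K but I′ ⊄ K. -/
/-! The functional `x ↦ ⟪u, x⟫`, with `u` the component of `w` orthogonal to `v`, is constant
on `ε = p + ℝv` and nonzero on `ε' = ℝw`. Hence a slab `|⟪u, x⟫| ≤ M` cut off by a large
ball is an origin-symmetric convex body containing a segment of `ε` of any prescribed length,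
while an origin-symmetric segment of `ε'` of that length leaves the slab once the length is
large. -/

open Set MeasureTheory Metric Pointwise

noncomputable section

/-- Euclidean space `ℝⁿ`. -/
abbrev Euc (n : ℕ) := EuclideanSpace ℝ (Fin n)

/-- The orthogonal projection onto `H`, as a self-map `x ↦ x|H` of the ambient space. -/
def projS {n : ℕ} (H : Submodule ℝ (Euc n)) (x : Euc n) : Euc n :=
  (H.orthogonalProjection x : Euc n)

/-- The reflection with respect to the subspace `H` : `x ↦ 2(x|H) − x`. -/
def reflS {n : ℕ} (H : Submodule ℝ (Euc n)) (x : Euc n) : Euc n :=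
  (2 : ℝ) • projS H x - x

/-- `A` is symmetric with respect to the subspace `H`. -/
def SymmWrt {n : ℕ} (H : Submodule ℝ (Euc n)) (A : Set (Euc n)) : Prop :=
  reflS H '' A = A

/-- The orthogonal projection `A|H` of a set `A` onto `H`. -/
def pimg {n : ℕ} (H : Submodule ℝ (Euc n)) (A : Set (Euc n)) : Set (Euc n) :=
  projS H '' A

/-- The `H`-symmetric spherical cylinder `(r(B∩H)+x)+s(B∩H^⊥)`. -/
def cylSet {n : ℕ} (H : Submodule ℝ (Euc n)) (r s : ℝ) (x : Euc n) : Set (Euc n) :=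
  (fun y => x + y) '' (r • (closedBall (0 : Euc n) 1 ∩ (H : Set (Euc n)))
    + s • (closedBall (0 : Euc n) 1 ∩ ((Hᗮ : Submodule ℝ (Euc n)) : Set (Euc n))))

/-- Convex bodies of `ℝⁿ`: compact convex sets with nonempty interior. -/
abbrev FullBody (n : ℕ) := {K : ConvexBody (Euc n) // (interior (K : Set (Euc n))).Nonempty}

/-- `L` is a convex body in the subspace `H`: a compact convex subset of `H` with
nonempty interior relative to `H`. -/
def IsBodyIn {n : ℕ} (H : Submodule ℝ (Euc n)) (L : Set (Euc n)) : Prop :=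
  L ⊆ (H : Set (Euc n)) ∧ IsCompact L ∧ Convex ℝ L ∧
    (interior (((↑) : H → Euc n) ⁻¹' L)).Nonempty

/-- Sets of special form: `L + s(B ∩ H^⊥)` with `L` a convex body in `H` and `s > 0`. -/
def SpecialForm {n : ℕ} (H : Submodule ℝ (Euc n)) (T : Set (Euc n)) : Prop :=
  ∃ (L : Set (Euc n)) (s : ℝ), IsBodyIn H L ∧ 0 < s ∧
    T = L + s • (closedBall (0 : Euc n) 1 ∩ ((Hᗮ : Submodule ℝ (Euc n)) : Set (Euc n)))

section

variable {E : Type*} [NormedAddCommGroup E] [InnerProductSpace ℝ E]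

def slabBall (u : E) (M R : ℝ) : Set E :=
  {x | |inner ℝ u x| ≤ M} ∩ closedBall 0 R

theorem slabBall_eq_preimage_inter (u : E) (M R : ℝ) :
    slabBall u M R = innerSL ℝ u ⁻¹' Icc (-M) M ∩ closedBall 0 R := by
  ext x
  simp [slabBall, abs_le]

theorem convex_slabBall (u : E) (M R : ℝ) : Convex ℝ (slabBall u M R) := by
  rw [slabBall_eq_preimage_inter]
  exact ((convex_Icc _ _).linear_preimage (innerSL ℝ u).toLinearMap).inter
    (convex_closedBall 0 R)

theorem isCompact_slabBall [ProperSpace E] (u : E) (M R : ℝ) : IsCompact (slabBall u M R) := by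
  rw [slabBall_eq_preimage_inter]
  exact (isCompact_closedBall 0 R).inter_left (isClosed_Icc.preimage (innerSL ℝ u).continuous)

theorem neg_slabBall (u : E) (M R : ℝ) : -slabBall u M R = slabBall u M R := by
  ext x
  simp [slabBall]

theorem zero_mem_interior_slabBall (u : E) {M R : ℝ} (hM : 0 < M) (hR : 0 < R) :
    (0 : E) ∈ interior (slabBall u M R) := by
  rw [slabBall_eq_preimage_inter, interior_inter]
  refine ⟨?_, mem_interior_iff_mem_nhds.2 (closedBall_mem_nhds 0 hR)⟩
  refine interior_mono (preimage_mono Ioo_subset_Icc_self) ?_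
  rw [(isOpen_Ioo.preimage (innerSL ℝ u).continuous).interior_eq]
  simpa using hM

theorem add_smul_mem_slabBall {u p v : E} {M R : ℝ} (huv : inner ℝ u v = 0)
    (hp : |inner ℝ u p| ≤ M) (r : ℝ) (hR : ‖p‖ + |r| * ‖v‖ ≤ R) :
    p + r • v ∈ slabBall u M R := by
  refine ⟨by simpa [inner_add_right, real_inner_smul_right, huv] using hp, ?_⟩
  rw [mem_closedBall_zero_iff]
  calc ‖p + r • v‖ ≤ ‖p‖ + ‖r • v‖ := norm_add_le _ _
    _ = ‖p‖ + |r| * ‖v‖ := by rw [norm_smul, Real.norm_eq_abs]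
    _ ≤ R := hR

theorem notMem_slabBall {u x : E} {M R : ℝ} (hx : M < |inner ℝ u x|) : x ∉ slabBall u M R :=
  fun h => (h.1.trans_lt hx).false

theorem exists_inner_eq_zero_inner_ne_zero {v w : E} (h : ∀ c : ℝ, w ≠ c • v) :
    ∃ u : E, inner ℝ u v = 0 ∧ inner ℝ u w ≠ 0 := by
  set P := (ℝ ∙ v).starProjection w
  have hP : P ∈ ℝ ∙ v := (ℝ ∙ v).starProjection_apply_mem w
  have hne : w - P ≠ 0 := by
    intro h0
    obtain ⟨c, hc⟩ := Submodule.mem_span_singleton.1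
      ((ℝ ∙ v).starProjection_eq_self_iff.1 (sub_eq_zero.1 h0).symm)
    exact h c hc.symm
  refine ⟨w - P,
    (ℝ ∙ v).starProjection_inner_eq_zero w v (Submodule.mem_span_singleton_self v), ?_⟩
  calc inner ℝ (w - P) w = inner ℝ (w - P) (w - P) + inner ℝ (w - P) P := by
        rw [← inner_add_right, sub_add_cancel]
    _ = inner ℝ (w - P) (w - P) := by
        rw [(ℝ ∙ v).starProjection_inner_eq_zero w P hP, add_zero]
    _ ≠ 0 := inner_self_ne_zero.2 hne

theorem segment_subset_line (p v : E) (s t : ℝ) :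
    segment ℝ (p + s • v) (p + t • v) ⊆ {x | ∃ r : ℝ, x = p + r • v} := by
  rw [segment_eq_image']
  rintro x ⟨θ, -, rfl⟩
  exact ⟨s + θ * (t - s), by module⟩

end

theorem stmt0_general (p v w : Euc 2) (hv : v ≠ 0)
    (hpar : ∀ c : ℝ, w ≠ c • v) :
    ∃ a b c : Euc 2,
      segment ℝ a b ⊆ {x | ∃ t : ℝ, x = p + t • v} ∧
      segment ℝ (-c) c ⊆ {x | ∃ t : ℝ, x = t • w} ∧
      dist a b = dist (-c) c ∧
      ∃ K : Set (Euc 2), IsCompact K ∧ Convex ℝ K ∧ (interior K).Nonempty ∧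
        K = -K ∧ segment ℝ a b ⊆ K ∧ ¬ segment ℝ (-c) c ⊆ K := by
  obtain ⟨u, huv, huw⟩ := exists_inner_eq_zero_inner_ne_zero hpar
  set M := |inner ℝ u p| + 1
  set s := 2 * M / |inner ℝ u w|
  set t := s * ‖w‖ / ‖v‖
  set R := ‖p‖ + t * ‖v‖ + 1
  have hM : 0 < M := by positivity
  have ht : 0 ≤ t := by positivity
  have hend (r : ℝ) (hr : |r| = t) : p + r • v ∈ slabBall u M R :=
    add_smul_mem_slabBall huv (by linarith) r (by rw [hr]; linarith)
  have hc : M < |inner ℝ u (s • w)| := by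
    rw [real_inner_smul_right, abs_mul, abs_of_pos (by positivity : 0 < s),
      div_mul_cancel₀ _ (abs_ne_zero.2 huw)]
    linarith
  have hdist : dist (p + (-t) • v) (p + t • v) = dist (-(s • w)) (s • w) := by
    rw [dist_eq_norm, dist_eq_norm, show p + (-t) • v - (p + t • v) = (-2 * t) • v by module,
      show -(s • w) - s • w = (-2 * s) • w by module, norm_smul, norm_smul,
      norm_mul, norm_mul, norm_neg, Real.norm_of_nonneg ht,
      Real.norm_of_nonneg (by positivity : 0 ≤ s)]
    simp only [t]
    field_simp
  refine ⟨p + (-t) • v, p + t • v, s • w, segment_subset_line p v (-t) t,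
    by simpa using segment_subset_line 0 w (-s) s, hdist, slabBall u M R,
    isCompact_slabBall u M R, convex_slabBall u M R,
    ⟨0, zero_mem_interior_slabBall u hM (by positivity)⟩, (neg_slabBall u M R).symm,
    (convex_slabBall u M R).segment_subset (hend _ (by simp [abs_of_nonneg ht]))
      (hend _ (abs_of_nonneg ht)),
    fun h => notMem_slabBall hc (h (right_mem_segment ℝ _ _))⟩

/-- given two non-parallel lines `ε = p + ℝv` and `ε' = ℝw` in `ℝ²` with `ε'`
through the origin, there are a segment `I ⊆ ε`, an `o`-symmetric segment `I' ⊆ ε'` of the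
same length, and an `o`-symmetric convex body `K` with `I ⊆ K` but `I' ⊄ K`. -/
theorem stmt0 (p v w : Euc 2) (hv : v ≠ 0) (hw : w ≠ 0)
    (hpar : ∀ c : ℝ, w ≠ c • v) :
    ∃ a b c : Euc 2,
      segment ℝ a b ⊆ {x | ∃ t : ℝ, x = p + t • v} ∧
      segment ℝ (-c) c ⊆ {x | ∃ t : ℝ, x = t • w} ∧
      dist a b = dist (-c) c ∧
      ∃ K : Set (Euc 2), IsCompact K ∧ Convex ℝ K ∧ (interior K).Nonempty ∧
        K = -K ∧ segment ℝ a b ⊆ K ∧ ¬ segment ℝ (-c) c ⊆ K :=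
  stmt0_general p v w hv hpar
end
end

section
/- Let H be a proper linear subspace of ℝⁿ and ◇ : 𝒦ⁿₙ → 𝒦ⁿ_H a monotonic map from convex bodies of ℝⁿ to H-symmetric compact convex sets, which is invariant on H-symmetric spherical cylinders. Then T ⊆ ◇T for every set T of special form, i.e., every set T = L + s(B ∩ H^⊥) where L is a convex body in H and s > 0. -/
open Set MeasureTheory Metric Pointwise

noncomputable section

/-
Every point `ℓ + v` of `T = L + s(B ∩ H^⊥)` with `ℓ` in the relative interior of `L` lies in
a small cylinder `(r(B ∩ H) + ℓ) + s(B ∩ H^⊥) ⊆ T`, which `◇` fixes; by monotonicity that point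
lies in `◇T`. Relative interior points are dense in the convex body `L`, and `◇T` is closed,
so all of `T` lies in `◇T`.
-/

lemma smul_closedUnitBall_inter_submodule {E : Type*} [NormedAddCommGroup E] [NormedSpace ℝ E]
    (W : Submodule ℝ E) {r : ℝ} (hr : 0 < r) :
    r • (closedBall (0 : E) 1 ∩ (W : Set E)) = closedBall 0 r ∩ W := by
  rw [smul_set_inter₀ hr.ne', smul_unitClosedBall_of_nonneg hr.le]
  congr 1
  ext x
  rw [mem_smul_set_iff_inv_smul_mem₀ hr.ne', SetLike.mem_coe, SetLike.mem_coe,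
    W.smul_mem_iff (inv_ne_zero hr.ne')]

section Cylinder

variable {n : ℕ} (H : Submodule ℝ (Euc n)) {r s : ℝ}

lemma cylSet_eq (hr : 0 < r) (hs : 0 < s) (c : Euc n) :
    cylSet H r s c = (c + ·) '' ((closedBall 0 r ∩ H) + (closedBall 0 s ∩ Hᗮ)) := by
  rw [cylSet, smul_closedUnitBall_inter_submodule H hr, smul_closedUnitBall_inter_submodule Hᗮ hs]

lemma convex_cylSet (r s : ℝ) (c : Euc n) : Convex ℝ (cylSet H r s c) :=
  ((((convex_closedBall _ _).inter H.convex).smul r).add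
    (((convex_closedBall _ _).inter Hᗮ.convex).smul s)).translate c

lemma isCompact_cylSet (hr : 0 < r) (hs : 0 < s) (c : Euc n) : IsCompact (cylSet H r s c) := by
  rw [cylSet_eq H hr hs]
  exact (((isCompact_closedBall _ _).inter_right H.closed_of_finiteDimensional).add
    ((isCompact_closedBall _ _).inter_right Hᗮ.closed_of_finiteDimensional)).image
    (continuous_const_add c)

lemma add_mem_cylSet (c : Euc n) {v : Euc n}
    (hv : v ∈ s • (closedBall (0 : Euc n) 1 ∩ (Hᗮ : Set (Euc n)))) : c + v ∈ cylSet H r s c :=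
  ⟨0 + v, add_mem_add (zero_mem_smul_set ⟨mem_closedBall_self zero_le_one, H.zero_mem⟩) hv,
    by rw [zero_add]⟩

lemma closedBall_subset_cylSet (hr : 0 < r) (hs : 0 < s) (c : Euc n) :
    closedBall c (min r s) ⊆ cylSet H r s c := by
  intro y hy
  rw [cylSet_eq H hr hs]
  have hw : ‖y - c‖ ≤ min r s := by rwa [← dist_eq_norm]
  refine ⟨H.starProjection (y - c) + Hᗮ.starProjection (y - c), add_mem_add ⟨?_, ?_⟩ ⟨?_, ?_⟩, ?_⟩
  · exact mem_closedBall_zero_iff.2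
      ((H.norm_starProjection_apply_le _).trans (hw.trans (min_le_left r s)))
  · exact H.starProjection_apply_mem _
  · exact mem_closedBall_zero_iff.2
      ((Hᗮ.norm_starProjection_apply_le _).trans (hw.trans (min_le_right r s)))
  · exact Hᗮ.starProjection_apply_mem _
  · simp only [H.starProjection_add_starProjection_orthogonal, add_sub_cancel]

def cylBody (hr : 0 < r) (hs : 0 < s) (c : Euc n) : FullBody n :=
  ⟨⟨cylSet H r s c, convex_cylSet H r s c, isCompact_cylSet H hr hs c,
      ⟨c, closedBall_subset_cylSet H hr hs c (mem_closedBall_self (le_min hr.le hs.le))⟩⟩,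
    ⟨c, mem_interior_iff_mem_nhds.2 (Filter.mem_of_superset
      (closedBall_mem_nhds c (lt_min hr hs)) (closedBall_subset_cylSet H hr hs c))⟩⟩

lemma cylSet_subset_add {L : Set (Euc n)} {c : Euc n} (hr : 0 < r)
    (hL : ∀ a ∈ H, ‖a‖ ≤ r → c + a ∈ L) :
    cylSet H r s c ⊆ L + s • (closedBall (0 : Euc n) 1 ∩ (Hᗮ : Set (Euc n))) := by
  rintro _ ⟨_, ⟨a, ha, b, hb, rfl⟩, rfl⟩
  rw [smul_closedUnitBall_inter_submodule H hr] at ha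
  exact ⟨c + a, hL a ha.2 (mem_closedBall_zero_iff.1 ha.1), b, hb, add_assoc c a b⟩

end Cylinder

section Diamond

variable {n : ℕ} {H : Submodule ℝ (Euc n)} {dia : FullBody n → ConvexBody (Euc n)}

lemma add_mem_dia_of_mem_interior
    (hmono : ∀ K L : FullBody n,
      (K.1 : Set (Euc n)) ⊆ (L.1 : Set (Euc n)) → (dia K : Set (Euc n)) ⊆ (dia L : Set (Euc n)))
    (hcyl : ∀ (C : FullBody n) (r s : ℝ) (x : Euc n), 0 < r → 0 < s → x ∈ H →
      (C.1 : Set (Euc n)) = cylSet H r s x → (dia C : Set (Euc n)) = (C.1 : Set (Euc n)))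
    {T : FullBody n} {L : Set (Euc n)} {s : ℝ} (hs : 0 < s)
    (hT : (T.1 : Set (Euc n)) = L + s • (closedBall (0 : Euc n) 1 ∩ (Hᗮ : Set (Euc n))))
    {q : H} (hq : q ∈ interior (((↑) : H → Euc n) ⁻¹' L)) {v : Euc n}
    (hv : v ∈ s • (closedBall (0 : Euc n) 1 ∩ (Hᗮ : Set (Euc n)))) :
    (q : Euc n) + v ∈ (dia T : Set (Euc n)) := by
  obtain ⟨ε, hε, hball⟩ := Metric.isOpen_iff.1 isOpen_interior q hq
  have hr : 0 < ε / 2 := half_pos hε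
  have hL : ∀ a ∈ H, ‖a‖ ≤ ε / 2 → (q : Euc n) + a ∈ L := fun a ha hna =>
    have hqa : q + ⟨a, ha⟩ ∈ ball q ε := by
      rw [mem_ball, dist_self_add_left, Submodule.coe_norm]; linarith
    (interior_subset (hball hqa) : q + ⟨a, ha⟩ ∈ ((↑) : H → Euc n) ⁻¹' L)
  have hC : ((cylBody H hr hs q).1 : Set (Euc n)) ⊆ T.1 := hT ▸ cylSet_subset_add H hr hL
  have hfix := hcyl (cylBody H hr hs q) _ _ _ hr hs q.2 rfl
  exact hmono _ _ hC (hfix ▸ add_mem_cylSet H (q : Euc n) hv)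

end Diamond

theorem stmt6_general {n : ℕ} (H : Submodule ℝ (Euc n))
    (dia : FullBody n → ConvexBody (Euc n))
    (hmono : ∀ K L : FullBody n,
      (K.1 : Set (Euc n)) ⊆ (L.1 : Set (Euc n)) → (dia K : Set (Euc n)) ⊆ (dia L : Set (Euc n)))
    (hcyl : ∀ (C : FullBody n) (r s : ℝ) (x : Euc n), 0 < r → 0 < s → x ∈ H →
      (C.1 : Set (Euc n)) = cylSet H r s x → (dia C : Set (Euc n)) = (C.1 : Set (Euc n))) :
    ∀ T : FullBody n, SpecialForm H (T.1 : Set (Euc n)) →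
      (T.1 : Set (Euc n)) ⊆ (dia T : Set (Euc n)) := by
  rintro T ⟨L, s, ⟨hLH, -, hLconv, hLint⟩, hs, hT⟩ x hx
  obtain ⟨ℓ, hℓ, v, hv, rfl⟩ := hT ▸ hx
  have hL' : Convex ℝ (((↑) : H → Euc n) ⁻¹' L) := hLconv.linear_preimage H.subtype
  have hℓ' : (⟨ℓ, hLH hℓ⟩ : H) ∈ closure (interior (((↑) : H → Euc n) ⁻¹' L)) := by
    rw [hL'.closure_interior_eq_closure_of_nonempty_interior hLint]
    exact subset_closure hℓ
  have hclosed : IsClosed (dia T : Set (Euc n)) := (dia T).isCompact.isClosed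
  rw [← hclosed.closure_eq]
  exact map_mem_closure (f := fun q : H => (q : Euc n) + v) (by fun_prop) hℓ'
    fun q hq => add_mem_dia_of_mem_interior hmono hcyl hs hT hq hv

/-- if `◇ : 𝒦ⁿₙ → 𝒦ⁿ_H` is monotonic and invariant on `H`-symmetric spherical
cylinders (`H` a proper subspace), then `T ⊆ ◇T` for every set `T` of special form. -/
theorem stmt6 {n : ℕ} (H : Submodule ℝ (Euc n)) (hH : H ≠ ⊤)
    (dia : FullBody n → ConvexBody (Euc n))
    (hcod : ∀ K, SymmWrt H (dia K : Set (Euc n)))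
    (hmono : ∀ K L : FullBody n,
      (K.1 : Set (Euc n)) ⊆ (L.1 : Set (Euc n)) → (dia K : Set (Euc n)) ⊆ (dia L : Set (Euc n)))
    (hcyl : ∀ (C : FullBody n) (r s : ℝ) (x : Euc n), 0 < r → 0 < s → x ∈ H →
      (C.1 : Set (Euc n)) = cylSet H r s x → (dia C : Set (Euc n)) = (C.1 : Set (Euc n))) :
    ∀ T : FullBody n, SpecialForm H (T.1 : Set (Euc n)) →
      (T.1 : Set (Euc n)) ⊆ (dia T : Set (Euc n)) :=
  stmt6_general H dia hmono hcyl
end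
end

section
/- Let H be a proper linear subspace of ℝⁿ and ◇ : 𝒦ⁿₙ → 𝒦ⁿ_H a monotonic map. If ◇T ⊆ T for every set T of special form (T = L + s(B ∩ H^⊥), L a convex body in H, s > 0) and (◇K)|H ⊇ K|H for all convex bodies K, then ◇ is projection invariant, i.e., (◇K)|H = K|H for all convex bodies K. -/
open Set MeasureTheory Metric Pointwise

noncomputable section

/-! Once `s` bounds `K`, the set `T = K|H + s(B ∩ H^⊥)` is of special form, contains `K`, and
has `T|H = K|H`. Monotonicity and `◇T ⊆ T` give `◇K ⊆ T`, hence `(◇K)|H ⊆ K|H`; the reverse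
inclusion is a hypothesis. -/

section ProjectionInvariance

variable {n : ℕ} (H : Submodule ℝ (Euc n))

theorem projS_eq_starProjection : projS H = H.starProjection := rfl

/-- The factor `s(B ∩ H^⊥)` of a set of special form. -/
def orthDisk (s : ℝ) : Set (Euc n) := s • (closedBall 0 1 ∩ (Hᗮ : Set (Euc n)))

theorem orthDisk_subset_orthogonal (s : ℝ) : orthDisk H s ⊆ Hᗮ := by
  rintro _ ⟨v, ⟨-, hv⟩, rfl⟩
  exact Hᗮ.smul_mem s hv

theorem isCompact_orthDisk (s : ℝ) : IsCompact (orthDisk H s) :=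
  ((isCompact_closedBall _ _).inter_right Hᗮ.closed_of_finiteDimensional).smul s

theorem convex_orthDisk (s : ℝ) : Convex ℝ (orthDisk H s) :=
  ((convex_closedBall _ _).inter Hᗮ.convex).smul s

theorem pimg_add_subset_of_subset_orthogonal {L C : Set (Euc n)} (hL : L ⊆ H)
    (hC : C ⊆ Hᗮ) : pimg H (L + C) ⊆ L := by
  rintro _ ⟨_, ⟨l, hl, c, hc, rfl⟩, rfl⟩
  rw [projS_eq_starProjection, map_add, Submodule.starProjection_eq_self_iff.2 (hL hl),
    H.starProjection_apply_eq_zero_iff.2 (hC hc), add_zero]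
  exact hl

theorem subset_pimg_add_orthDisk {K : Set (Euc n)} {s : ℝ} (hs : 0 < s)
    (hK : K ⊆ closedBall 0 s) : K ⊆ pimg H K + orthDisk H s := by
  intro x hx
  have hperp : x - projS H x ∈ Hᗮ := H.sub_starProjection_mem_orthogonal x
  have hnorm : ‖x - projS H x‖ ≤ s := by
    rw [projS_eq_starProjection, ← Submodule.starProjection_orthogonal_val]
    exact (Hᗮ.norm_starProjection_apply_le x).trans (mem_closedBall_zero_iff.1 (hK hx))
  refine ⟨projS H x, ⟨x, hx, rfl⟩, x - projS H x,
    ⟨s⁻¹ • (x - projS H x), ⟨?_, Hᗮ.smul_mem _ hperp⟩, ?_⟩, add_sub_cancel _ _⟩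
  · rw [mem_closedBall_zero_iff, norm_smul, norm_inv, Real.norm_of_nonneg hs.le]
    exact inv_mul_le_one_of_le₀ hnorm hs.le
  · exact smul_inv_smul₀ hs.ne' _

theorem isBodyIn_pimg (K : FullBody n) : IsBodyIn H (pimg H (K.1 : Set (Euc n))) := by
  refine ⟨?_, K.1.isCompact.image H.starProjection.continuous,
    K.1.convex.linear_image H.starProjection.toLinearMap, ?_⟩
  · rintro _ ⟨x, -, rfl⟩
    exact H.starProjection_apply_mem x
  · have hopen : IsOpenMap H.orthogonalProjectionOnto :=
      H.orthogonalProjectionOnto.isOpenMap fun v => ⟨v, by simp⟩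
    obtain ⟨x, hx⟩ := K.2
    refine ⟨H.orthogonalProjectionOnto x,
      interior_maximal ?_ (hopen _ isOpen_interior) ⟨x, hx, rfl⟩⟩
    rintro _ ⟨y, hy, rfl⟩
    exact ⟨y, interior_subset hy, rfl⟩

theorem exists_specialForm_superset (K : FullBody n) :
    ∃ T : FullBody n, SpecialForm H (T.1 : Set (Euc n)) ∧
      (K.1 : Set (Euc n)) ⊆ T.1 ∧ pimg H (T.1 : Set (Euc n)) ⊆ pimg H K.1 := by
  obtain ⟨R, hR⟩ := K.1.isCompact.isBounded.subset_closedBall 0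
  have hs : 0 < max R 1 := lt_max_of_lt_right one_pos
  have hKT := subset_pimg_add_orthDisk H hs
    (hR.trans (closedBall_subset_closedBall (le_max_left R 1)))
  have hL := isBodyIn_pimg H K
  have ⟨hLH, hLcompact, hLconvex, _⟩ := hL
  let T : ConvexBody (Euc n) :=
    ⟨_, hLconvex.add (convex_orthDisk H _), hLcompact.add (isCompact_orthDisk H _),
      K.1.nonempty.mono hKT⟩
  exact ⟨⟨T, K.2.mono (interior_mono hKT)⟩, ⟨_, _, hL, hs, rfl⟩, hKT,
    pimg_add_subset_of_subset_orthogonal H hLH (orthDisk_subset_orthogonal H _)⟩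

end ProjectionInvariance

theorem stmt7_general {n : ℕ} (H : Submodule ℝ (Euc n))
    (dia : FullBody n → ConvexBody (Euc n))
    (hmono : ∀ K L : FullBody n,
      (K.1 : Set (Euc n)) ⊆ (L.1 : Set (Euc n)) → (dia K : Set (Euc n)) ⊆ (dia L : Set (Euc n)))
    (hspec : ∀ T : FullBody n, SpecialForm H (T.1 : Set (Euc n)) →
      (dia T : Set (Euc n)) ⊆ (T.1 : Set (Euc n)))
    (hproj : ∀ K : FullBody n, pimg H (K.1 : Set (Euc n)) ⊆ pimg H (dia K : Set (Euc n))) :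
    ∀ K : FullBody n, pimg H (dia K : Set (Euc n)) = pimg H (K.1 : Set (Euc n)) := by
  intro K
  obtain ⟨T, hT, hKT, hTK⟩ := exists_specialForm_superset H K
  refine Subset.antisymm ?_ (hproj K)
  calc pimg H (dia K) ⊆ pimg H T.1 := image_mono ((hmono K T hKT).trans (hspec T hT))
    _ ⊆ pimg H K.1 := hTK

/-- if `◇ : 𝒦ⁿₙ → 𝒦ⁿ_H` is monotonic, `◇T ⊆ T` for every set `T` of special
form, and `(◇K)|H ⊇ K|H` for every convex body `K`, then `◇` is projection invariant. -/
theorem stmt7 {n : ℕ} (H : Submodule ℝ (Euc n)) (hH : H ≠ ⊤)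
    (dia : FullBody n → ConvexBody (Euc n))
    (hcod : ∀ K, SymmWrt H (dia K : Set (Euc n)))
    (hmono : ∀ K L : FullBody n,
      (K.1 : Set (Euc n)) ⊆ (L.1 : Set (Euc n)) → (dia K : Set (Euc n)) ⊆ (dia L : Set (Euc n)))
    (hspec : ∀ T : FullBody n, SpecialForm H (T.1 : Set (Euc n)) →
      (dia T : Set (Euc n)) ⊆ (T.1 : Set (Euc n)))
    (hproj : ∀ K : FullBody n, pimg H (K.1 : Set (Euc n)) ⊆ pimg H (dia K : Set (Euc n))) :
    ∀ K : FullBody n, pimg H (dia K : Set (Euc n)) = pimg H (K.1 : Set (Euc n)) :=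
  stmt7_general H dia hmono hspec hproj
end
end

section
/- Let H be a proper linear subspace of ℝⁿ and ◇ : 𝒦ⁿ → 𝒦ⁿ_H a monotonic map whose restriction to convex bodies is projection invariant ((◇K)|H = K|H for all K ∈ 𝒦ⁿₙ). Then ◇ is projection invariant on all of 𝒦ⁿ. -/
/-!
For an arbitrary `K ∈ 𝒦ⁿ` and `ε > 0`, monotonicity gives `◇K ⊆ ◇(K + εB)`, and `K + εB` is a
convex body, so `(◇K)|H ⊆ (K + εB)|H ⊆ K|H + εB`; letting `ε → 0` gives `(◇K)|H ⊆ K|H`, as `K|H` is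
closed. Conversely, for `x ∈ K` the set `◇{x}` is nonempty, lies in `◇K`, and projects into
`{x|H}`, so `◇K` contains a point over `x|H`.
-/

open Set MeasureTheory Metric Pointwise

noncomputable section

open scoped NNReal

theorem LipschitzWith.image_cthickening_subset {α β : Type*} [PseudoMetricSpace α]
    [PseudoMetricSpace β] {C : ℝ≥0} {f : α → β} (hf : LipschitzWith C f) {s : Set α}
    (hs : IsCompact s) {δ : ℝ} (hδ : 0 ≤ δ) :
    f '' cthickening δ s ⊆ cthickening (C * δ) (f '' s) := by
  rw [hs.cthickening_eq_biUnion_closedBall hδ]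
  rintro _ ⟨y, hy, rfl⟩
  obtain ⟨x, hx, hyx⟩ := mem_iUnion₂.mp hy
  exact mem_cthickening_of_dist_le _ _ _ _ (mem_image_of_mem f hx)
    ((hf.dist_le_mul y x).trans (by gcongr; exact hyx))

namespace ConvexBody

section Singleton

variable {V : Type*} [TopologicalSpace V] [AddCommGroup V] [Module ℝ V]

def singleton (x : V) : ConvexBody V :=
  ⟨{x}, convex_singleton x, isCompact_singleton, singleton_nonempty x⟩

@[simp]
theorem coe_singleton (x : V) : (singleton x : Set V) = {x} := rfl

theorem singleton_le {x : V} {K : ConvexBody V} (hx : x ∈ K) : singleton x ≤ K :=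
  Set.singleton_subset_iff.mpr hx

end Singleton

section Thickening

variable {E : Type*} [NormedAddCommGroup E] [NormedSpace ℝ E] [ProperSpace E]

def cthickening (K : ConvexBody E) (δ : ℝ) : ConvexBody E :=
  ⟨Metric.cthickening δ K, K.convex.cthickening δ, K.isCompact.cthickening,
    K.nonempty.mono (self_subset_cthickening _)⟩

theorem le_cthickening (K : ConvexBody E) (δ : ℝ) : K ≤ K.cthickening δ :=
  self_subset_cthickening (K : Set E)

theorem interior_cthickening_nonempty (K : ConvexBody E) {δ : ℝ} (hδ : 0 < δ) :
    (interior (K.cthickening δ : Set E)).Nonempty :=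
  ((thickening_nonempty_iff_of_pos hδ).2 K.nonempty).mono
    (thickening_subset_interior_cthickening δ _)

end Thickening

end ConvexBody

theorem Monotone.image_apply_subset_image {E F : Type*} [NormedAddCommGroup E] [NormedSpace ℝ E]
    [ProperSpace E] [MetricSpace F] {dia : ConvexBody E → ConvexBody E}
    (hdia : Monotone dia) {C : ℝ≥0} {f : E → F} (hf : LipschitzWith C f)
    (hbody : ∀ K : ConvexBody E, (interior (K : Set E)).Nonempty → f '' dia K ⊆ f '' K)
    (K : ConvexBody E) : f '' dia K ⊆ f '' K := by
  have hclosed : IsClosed (f '' K) := (K.isCompact.image hf.continuous).isClosed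
  rw [← hclosed.closure_eq, closure_eq_iInter_cthickening]
  refine subset_iInter₂ fun ε hε => ?_
  have hδ : 0 < ε / (C + 1) := by positivity
  have hCδ : C * (ε / (C + 1)) ≤ ε := by
    rw [mul_div_assoc', div_le_iff₀ (by positivity)]
    nlinarith
  calc f '' dia K ⊆ f '' dia (K.cthickening (ε / (C + 1))) :=
        image_mono (hdia (K.le_cthickening _))
    _ ⊆ f '' K.cthickening (ε / (C + 1)) := hbody _ (K.interior_cthickening_nonempty hδ)
    _ ⊆ cthickening (C * (ε / (C + 1))) (f '' K) := hf.image_cthickening_subset K.isCompact hδ.le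
    _ ⊆ cthickening ε (f '' K) := cthickening_mono hCδ _

theorem Monotone.image_subset_image_apply {V β : Type*} [TopologicalSpace V] [AddCommGroup V]
    [Module ℝ V] {dia : ConvexBody V → ConvexBody V} (hdia : Monotone dia) {f : V → β}
    (hsub : ∀ K : ConvexBody V, f '' dia K ⊆ f '' K) (K : ConvexBody V) :
    f '' K ⊆ f '' dia K := by
  rintro _ ⟨x, hx, rfl⟩
  obtain ⟨z, hz⟩ := (dia (.singleton x)).nonempty
  have hfz : f z = f x := by
    simpa using hsub (.singleton x) (mem_image_of_mem f hz)
  exact ⟨z, hdia (ConvexBody.singleton_le hx) hz, hfz⟩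

theorem stmt10_general {n : ℕ} (H : Submodule ℝ (Euc n))
    (dia : ConvexBody (Euc n) → ConvexBody (Euc n))
    (hmono : ∀ K L : ConvexBody (Euc n),
      (K : Set (Euc n)) ⊆ (L : Set (Euc n)) → (dia K : Set (Euc n)) ⊆ (dia L : Set (Euc n)))
    (hproj : ∀ K : ConvexBody (Euc n), (interior (K : Set (Euc n))).Nonempty →
      pimg H (dia K : Set (Euc n)) = pimg H (K : Set (Euc n))) :
    ∀ K : ConvexBody (Euc n), pimg H (dia K : Set (Euc n)) = pimg H (K : Set (Euc n)) := by
  have hdia : Monotone dia := fun K L => hmono K L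
  -- `pimg H` is, by definition, the image under `H.starProjection`.
  have hsub : ∀ K, pimg H (dia K : Set (Euc n)) ⊆ pimg H (K : Set (Euc n)) :=
    hdia.image_apply_subset_image H.starProjection.lipschitz fun K hK => (hproj K hK).subset
  exact fun K => (hsub K).antisymm (hdia.image_subset_image_apply hsub K)

/-- Lemma on reduction to one case: if `◇ : 𝒦ⁿ → 𝒦ⁿ_H` is monotonic and its
restriction to convex bodies is projection invariant, then `◇` is projection invariant. -/
theorem stmt10 {n : ℕ} (H : Submodule ℝ (Euc n)) (hH : H ≠ ⊤)
    (dia : ConvexBody (Euc n) → ConvexBody (Euc n))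
    (hcod : ∀ K, SymmWrt H (dia K : Set (Euc n)))
    (hmono : ∀ K L : ConvexBody (Euc n),
      (K : Set (Euc n)) ⊆ (L : Set (Euc n)) → (dia K : Set (Euc n)) ⊆ (dia L : Set (Euc n)))
    (hproj : ∀ K : ConvexBody (Euc n), (interior (K : Set (Euc n))).Nonempty →
      pimg H (dia K : Set (Euc n)) = pimg H (K : Set (Euc n))) :
    ∀ K : ConvexBody (Euc n), pimg H (dia K : Set (Euc n)) = pimg H (K : Set (Euc n)) :=
  stmt10_general H dia hmono hproj
end
end

section
/- Let ◇ : 𝒦ⁿ² → 𝒦²_{{o}} be a monotonic, mean-width-preserving symmetrization on compact convex subsets of ℝ², invariant on origin-symmetric sets, which maps line segments to line segments. Then for every origin-symmetric line segment J and every x ∈ ℝ², ◇(J + x) = J. -/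
open Set MeasureTheory Metric Pointwise

noncomputable section

/-- The mean width `W(K) = 2∫_{S^{n-1}} h_K(u) dσ(u)`, where `σ` is the rotation invariant
probability measure on the unit sphere (normalized `(n-1)`-dimensional Hausdorff measure)
and `h_K` is the support function of `K`. -/
def meanWidth {n : ℕ} (K : Set (Euc n)) : ℝ :=
  2 * ∫ u in sphere (0 : Euc n) 1, sSup ((fun x => (inner ℝ x u : ℝ)) '' K)
      ∂((μH[(n : ℝ) - 1] (sphere (0 : Euc n) 1))⁻¹ • μH[(n : ℝ) - 1])

open scoped RealInnerProductSpace

/-!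
Write `J = [-c, c]`. The mean width of a segment is a fixed positive multiple of its length, so
`◇` sends a translate of an `o`-symmetric segment to the `o`-symmetric segment of the same length:
`◇(J + x) = [-d, d]` with `‖d‖ = ‖c‖`. For `r ≥ 1` we have `J + x ⊆ rJ + x ⊆ rJ + [-x, x]`, and
the last set is `o`-symmetric, hence fixed by `◇`. Monotonicity gives `d ∈ ◇(rJ + x) = [-e, e]`
with `‖e‖ = r‖c‖` and `e ∈ rJ + [-x, x]`, so `d` lies within `‖x‖ / r` of the line `ℝc`.
Letting `r → ∞`, `d ∈ ℝc`, hence `d = ±c`.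
-/

section SymmetricSegment

variable {𝕜 E : Type*} [Field 𝕜] [LinearOrder 𝕜] [IsStrictOrderedRing 𝕜] [AddCommGroup E]
  [Module 𝕜 E]

theorem neg_segment (p q : E) : -segment 𝕜 p q = segment 𝕜 (-p) (-q) := by
  rw [← image_neg_eq_neg]
  exact image_segment 𝕜 (-LinearMap.id : E →ₗ[𝕜] E).toAffineMap p q

theorem neg_segment_neg (v : E) : -segment 𝕜 (-v) v = segment 𝕜 (-v) v := by
  rw [neg_segment, neg_neg, segment_symm]

theorem mem_segment_neg_iff {v z : E} : z ∈ segment 𝕜 (-v) v ↔ ∃ t : 𝕜, |t| ≤ 1 ∧ z = t • v := by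
  constructor
  · rintro ⟨p, q, hp, hq, hpq, rfl⟩
    exact ⟨q - p, abs_le.2 ⟨by linarith, by linarith⟩, by module⟩
  · rintro ⟨t, ht, rfl⟩
    obtain ⟨ht₁, ht₂⟩ := abs_le.1 ht
    exact ⟨(1 - t) / 2, (1 + t) / 2, by linarith, by linarith, by ring, by module⟩

theorem segment_neg_subset_segment_neg_smul {r : 𝕜} (hr : 1 ≤ r) (v : E) :
    segment 𝕜 (-v) v ⊆ segment 𝕜 (-(r • v)) (r • v) := by
  intro z hz
  obtain ⟨t, ht, rfl⟩ := mem_segment_neg_iff.1 hz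
  have hr₀ : 0 < r := zero_lt_one.trans_le hr
  refine mem_segment_neg_iff.2 ⟨t / r, ?_, by rw [smul_smul, div_mul_cancel₀ t hr₀.ne']⟩
  rw [abs_div, abs_of_pos hr₀, div_le_one hr₀]
  linarith

theorem eq_neg_of_segment_eq_neg {p q : E} (h : segment 𝕜 p q = -segment 𝕜 p q) : p = -q := by
  rw [neg_segment] at h
  have hp : -p ∈ segment 𝕜 p q := h ▸ left_mem_segment 𝕜 (-p) (-q)
  have hq : -q ∈ segment 𝕜 p q := h ▸ right_mem_segment 𝕜 (-p) (-q)
  rw [segment_eq_image'] at hp hq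
  obtain ⟨s, ⟨-, hs₁⟩, hs⟩ := hp
  obtain ⟨t, ⟨ht₀, -⟩, ht⟩ := hq
  have hst : (t - s + 1) • (q - p) = 0 := by linear_combination (norm := module) ht - hs
  rcases smul_eq_zero.1 hst with hts | hpq
  · have ht₀ : t = 0 := by linarith
    simpa [ht₀] using ht
  · obtain rfl := (sub_eq_zero.1 hpq).symm
    simpa using hs

end SymmetricSegment

section NormedSpace

variable {E : Type*} [NormedAddCommGroup E] [NormedSpace ℝ E]

theorem exists_norm_mul_norm_sub_smul_le {a x d e : E} (hd : d ∈ segment ℝ (-e) e)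
    (he : e ∈ segment ℝ (-a) a + segment ℝ (-x) x) :
    ∃ r : ℝ, ‖e‖ * ‖d - r • a‖ ≤ ‖d‖ * ‖x‖ := by
  obtain ⟨t, -, rfl⟩ := mem_segment_neg_iff.1 hd
  obtain ⟨_, hp, _, hq, rfl⟩ := he
  obtain ⟨α, -, rfl⟩ := mem_segment_neg_iff.1 hp
  obtain ⟨β, hβ, rfl⟩ := mem_segment_neg_iff.1 hq
  refine ⟨t * α, ?_⟩
  have hsub : t • (α • a + β • x) - (t * α) • a = β • t • x := by module
  rw [hsub, norm_smul β, norm_smul t, norm_smul t, Real.norm_eq_abs, Real.norm_eq_abs]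
  calc ‖α • a + β • x‖ * (|β| * (|t| * ‖x‖))
      = |β| * (|t| * ‖α • a + β • x‖ * ‖x‖) := by ring
    _ ≤ 1 * (|t| * ‖α • a + β • x‖ * ‖x‖) := by gcongr
    _ = _ := one_mul _

theorem mem_span_singleton_of_forall_mul_norm_sub_le {c d : E} (M : ℝ)
    (h : ∀ r ≥ 1, ∃ s : ℝ, r * ‖d - s • c‖ ≤ M) : d ∈ ℝ ∙ c := by
  refine (ℝ ∙ c).closed_of_finiteDimensional.closure_subset
    (Metric.mem_closure_iff.2 fun ε hε => ?_)
  have hr : 1 ≤ 1 + |M| / ε := le_add_of_nonneg_right (by positivity)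
  obtain ⟨s, hs⟩ := h _ hr
  refine ⟨s • c, Submodule.mem_span_singleton.2 ⟨s, rfl⟩, ?_⟩
  rw [dist_eq_norm]
  refine lt_of_mul_lt_mul_left (hs.trans_lt ?_) (zero_le_one.trans hr)
  rw [add_mul, one_mul, div_mul_cancel₀ _ hε.ne']
  linarith [le_abs_self M]

theorem segment_neg_eq_of_mem_span_singleton {c d : E} (hd : d ∈ ℝ ∙ c) (hn : ‖d‖ = ‖c‖) :
    segment ℝ (-d) d = segment ℝ (-c) c := by
  obtain ⟨r, rfl⟩ := Submodule.mem_span_singleton.1 hd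
  rcases eq_or_ne c 0 with rfl | hc
  · simp
  rw [norm_smul, Real.norm_eq_abs, mul_eq_right₀ (norm_ne_zero_iff.2 hc)] at hn
  rcases abs_eq (zero_le_one' ℝ) |>.1 hn with rfl | rfl
  · rw [one_smul]
  · rw [neg_one_smul, neg_neg, segment_symm]

theorem isCompact_segment (a b : E) : IsCompact (segment ℝ a b) := by
  rw [segment_eq_image]
  exact isCompact_Icc.image (by fun_prop)

def segmentBody (a b : E) : ConvexBody E :=
  ⟨segment ℝ a b, convex_segment a b, isCompact_segment a b, ⟨a, left_mem_segment ℝ a b⟩⟩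

@[simp] theorem coe_segmentBody (a b : E) : (segmentBody a b : Set E) = segment ℝ a b := rfl

end NormedSpace

section InnerProductSpace

variable {E : Type*} [NormedAddCommGroup E] [InnerProductSpace ℝ E]

theorem sSup_image_inner_segment (a b u : E) :
    sSup ((⟪·, u⟫) '' segment ℝ a b) = (⟪a + b, u⟫ + |⟪b - a, u⟫|) / 2 := by
  have himage : (⟪·, u⟫) '' segment ℝ a b = segment ℝ ⟪a, u⟫ ⟪b, u⟫ :=
    image_segment ℝ ((innerₛₗ ℝ).flip u).toAffineMap a b
  rw [himage, segment_eq_Icc' _ _, csSup_Icc min_le_max, inner_add_left, inner_sub_left]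
  linarith [min_add_max ⟪a, u⟫ ⟪b, u⟫, max_sub_min_eq_abs ⟪a, u⟫ ⟪b, u⟫]

variable [MeasurableSpace E] [BorelSpace E]

theorem setIntegral_sphere_comp_linearIsometryEquiv (R : E ≃ₗᵢ[ℝ] E) (s : ℝ) (g : E → ℝ) :
    ∫ u in sphere (0 : E) 1, g (R u) ∂μH[s] = ∫ u in sphere (0 : E) 1, g u ∂μH[s] := by
  have h := (R.toIsometryEquiv.measurePreserving_hausdorffMeasure s).setIntegral_preimage_emb
    R.toHomeomorph.measurableEmbedding g (sphere 0 1)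
  rw [IsometryEquiv.preimage_sphere] at h
  simpa using h

theorem setIntegral_sphere_inner_eq_zero (v : E) (s : ℝ) :
    ∫ u in sphere (0 : E) 1, ⟪v, u⟫ ∂μH[s] = 0 := by
  have h := setIntegral_sphere_comp_linearIsometryEquiv (LinearIsometryEquiv.neg ℝ) s (⟪v, ·⟫)
  simp only [LinearIsometryEquiv.coe_neg, inner_neg_right, integral_neg] at h
  linarith

theorem setIntegral_sphere_abs_inner (v e : E) (he : ‖e‖ = 1) (s : ℝ) :
    ∫ u in sphere (0 : E) 1, |⟪v, u⟫| ∂μH[s] = ‖v‖ * ∫ u in sphere (0 : E) 1, |⟪e, u⟫| ∂μH[s] := by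
  set w := ‖v‖ • e
  have hw : ‖v‖ = ‖w‖ := by simp [w, norm_smul, he]
  set R := (ℝ ∙ (v - w))ᗮ.reflection
  have hR : ∀ u, ⟪v, R u⟫ = ⟪w, u⟫ := fun u => by
    rw [← Submodule.reflection_sub hw, ← R.inner_map_map, Submodule.reflection_reflection]
  rw [← setIntegral_sphere_comp_linearIsometryEquiv R s]
  simp only [hR, w, real_inner_smul_left, abs_mul, abs_norm, integral_const_mul]

end InnerProductSpace

theorem lipschitzWith_exp_I_mul : LipschitzWith 1 fun t : ℝ => Complex.exp (Complex.I * t) := by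
  refine LipschitzWith.of_dist_le_mul fun s t => ?_
  have h : Complex.exp (Complex.I * s) - Complex.exp (Complex.I * t)
      = Complex.exp (Complex.I * t) * (Complex.exp (Complex.I * ↑(s - t)) - 1) := by
    rw [mul_sub, ← Complex.exp_add]; push_cast; ring_nf
  rw [dist_eq_norm, h, norm_mul, Complex.norm_exp_I_mul_ofReal, one_mul, NNReal.coe_one, one_mul,
    Real.dist_eq, ← Real.norm_eq_abs]
  exact Real.norm_exp_I_mul_ofReal_sub_one_le

theorem hausdorffMeasure_sphere_two_ne_top : μH[1] (sphere (0 : Euc 2) 1) ≠ ⊤ := by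
  set e := Complex.orthonormalBasisOneI.repr
  set γ : ℝ → Euc 2 := fun t => e (Complex.exp (Complex.I * t))
  have hγ : LipschitzWith 1 γ := by
    have h := e.isometry.lipschitz.comp lipschitzWith_exp_I_mul
    rwa [one_mul] at h
  have hS : sphere (0 : Euc 2) 1 ⊆ γ '' Icc (-Real.pi) Real.pi := by
    intro u hu
    have hz : ‖e.symm u‖ = 1 := by simpa using hu
    refine ⟨(e.symm u).arg, ⟨(Complex.neg_pi_lt_arg _).le, Complex.arg_le_pi _⟩, ?_⟩
    have := Complex.norm_mul_exp_arg_mul_I (e.symm u)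
    rw [hz, Complex.ofReal_one, one_mul, mul_comm] at this
    simp [γ, this]
  refine ne_top_of_le_ne_top ?_
    ((measure_mono hS).trans (hγ.hausdorffMeasure_image_le zero_le_one _))
  simp [Real.volume_Icc]

theorem hausdorffMeasure_sphere_two_ne_zero : μH[1] (sphere (0 : Euc 2) 1) ≠ 0 := by
  have hf : LipschitzWith 1 fun u : Euc 2 => u 0 :=
    LipschitzWith.of_dist_le_mul fun u v => by simpa using PiLp.dist_apply_le u v 0
  have hS : Icc (-1 : ℝ) 1 ⊆ (fun u : Euc 2 => u 0) '' sphere 0 1 := by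
    rintro y ⟨hy₁, hy₂⟩
    refine ⟨!₂[y, √(1 - y ^ 2)], ?_, rfl⟩
    rw [mem_sphere_zero_iff_norm, EuclideanSpace.norm_eq, Fin.sum_univ_two]
    simp [Real.sq_sqrt (show 0 ≤ 1 - y ^ 2 by nlinarith)]
  intro h
  have := (measure_mono hS).trans (hf.hausdorffMeasure_image_le zero_le_one _)
  norm_num [h, Real.volume_Icc] at this

theorem integrableOn_sphere_two {f : Euc 2 → ℝ} (hf : Continuous f) :
    IntegrableOn f (sphere 0 1) μH[1] := by
  obtain ⟨C, hC⟩ := (isCompact_sphere (0 : Euc 2) 1).exists_bound_of_continuousOn hf.continuousOn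
  exact Measure.integrableOn_of_bounded hausdorffMeasure_sphere_two_ne_top hf.aestronglyMeasurable
    ((ae_restrict_iff' isClosed_sphere.measurableSet).2 (ae_of_all _ hC))

/-- On the circle `|u₀| + |u₁| ≥ 1`, and by rotation invariance both coordinates have the same
absolute integral as `⟪e, ·⟫`. -/
theorem setIntegral_sphere_two_abs_inner_pos {e : Euc 2} (he : ‖e‖ = 1) :
    0 < ∫ u in sphere (0 : Euc 2) 1, |⟪e, u⟫| ∂μH[1] := by
  set S := sphere (0 : Euc 2) 1
  set e₀ : Euc 2 := EuclideanSpace.single 0 1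
  set e₁ : Euc 2 := EuclideanSpace.single 1 1
  have hcover : ∀ u ∈ S, 1 ≤ |⟪e₀, u⟫| + |⟪e₁, u⟫| := by
    intro u hu
    rw [mem_sphere_zero_iff_norm, EuclideanSpace.norm_eq, Fin.sum_univ_two, Real.sqrt_eq_one] at hu
    simp only [Real.norm_eq_abs, sq_abs] at hu
    simp only [e₀, e₁, EuclideanSpace.inner_single_left, map_one, one_mul]
    nlinarith [abs_nonneg (u 0), abs_nonneg (u 1), sq_abs (u 0), sq_abs (u 1)]
  have hint : ∀ v : Euc 2, IntegrableOn (fun u => |⟪v, u⟫|) S μH[1] := fun v =>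
    integrableOn_sphere_two (continuous_const.inner continuous_id).abs
  have hmeasure : (μH[1] S).toReal ≤ 2 * ∫ u in S, |⟪e, u⟫| ∂μH[1] :=
    calc (μH[1] S).toReal = ∫ _ in S, (1 : ℝ) ∂μH[1] := by simp [Measure.real]
      _ ≤ ∫ u in S, |⟪e₀, u⟫| + |⟪e₁, u⟫| ∂μH[1] :=
          setIntegral_mono_on (integrableOn_sphere_two continuous_const) ((hint _).add (hint _))
            isClosed_sphere.measurableSet hcover
      _ = 2 * ∫ u in S, |⟪e, u⟫| ∂μH[1] := by
          rw [integral_add (hint _) (hint _), setIntegral_sphere_abs_inner e₀ e he,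
            setIntegral_sphere_abs_inner e₁ e he]
          simp only [e₀, e₁, PiLp.norm_single, norm_one]
          ring
  have hpos : 0 < (μH[1] S).toReal :=
    ENNReal.toReal_pos hausdorffMeasure_sphere_two_ne_zero hausdorffMeasure_sphere_two_ne_top
  linarith

theorem exists_meanWidth_segment_eq :
    ∃ κ > 0, ∀ a b : Euc 2, meanWidth (segment ℝ a b) = κ * ‖b - a‖ := by
  have he₀ : ‖(EuclideanSpace.single 0 1 : Euc 2)‖ = 1 := by simp
  refine ⟨(μH[1] (sphere (0 : Euc 2) 1))⁻¹.toReal *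
      ∫ u in sphere (0 : Euc 2) 1, |⟪EuclideanSpace.single 0 1, u⟫| ∂μH[1], ?_, fun a b => ?_⟩
  · exact mul_pos (ENNReal.toReal_pos (ENNReal.inv_ne_zero.2 hausdorffMeasure_sphere_two_ne_top)
      (ENNReal.inv_ne_top.2 hausdorffMeasure_sphere_two_ne_zero))
      (setIntegral_sphere_two_abs_inner_pos he₀)
  have hexp : ((2 : ℕ) : ℝ) - 1 = 1 := by norm_num
  rw [meanWidth, hexp, Measure.restrict_smul, integral_smul_measure]
  simp_rw [sSup_image_inner_segment]
  rw [integral_div, integral_add (integrableOn_sphere_two (f := (⟪a + b, ·⟫)) (by fun_prop))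
    (integrableOn_sphere_two (f := fun u => |⟪b - a, u⟫|) (by fun_prop)),
    setIntegral_sphere_inner_eq_zero, setIntegral_sphere_abs_inner _ _ he₀, smul_eq_mul]
  ring

theorem exists_symmetrization_eq_segment_neg (dia : ConvexBody (Euc 2) → ConvexBody (Euc 2))
    (hcod : ∀ K, (dia K : Set (Euc 2)) = -(dia K : Set (Euc 2)))
    (hW : ∀ K : ConvexBody (Euc 2),
      meanWidth (dia K : Set (Euc 2)) = meanWidth (K : Set (Euc 2)))
    (hsegmap : ∀ (K : ConvexBody (Euc 2)) (a b : Euc 2), (K : Set (Euc 2)) = segment ℝ a b →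
      ∃ c d : Euc 2, (dia K : Set (Euc 2)) = segment ℝ c d)
    {L : ConvexBody (Euc 2)} {v x : Euc 2}
    (hL : (L : Set (Euc 2)) = (fun y => x + y) '' segment ℝ (-v) v) :
    ∃ d, (dia L : Set (Euc 2)) = segment ℝ (-d) d ∧ ‖d‖ = ‖v‖ := by
  rw [segment_translate_image] at hL
  obtain ⟨p, q, hpq⟩ := hsegmap L _ _ hL
  obtain rfl : p = -q := eq_neg_of_segment_eq_neg (hpq ▸ hcod L)
  refine ⟨q, hpq, ?_⟩
  obtain ⟨κ, hκ, hwidth⟩ := exists_meanWidth_segment_eq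
  have hlength := hW L
  rw [hpq, hL, hwidth, hwidth, mul_right_inj' hκ.ne', add_sub_add_left_eq_sub, sub_neg_eq_add,
    sub_neg_eq_add, ← two_smul ℝ, ← two_smul ℝ, norm_smul, norm_smul, Real.norm_ofNat] at hlength
  exact mul_left_cancel₀ two_ne_zero hlength

theorem exists_mul_norm_sub_smul_le_of_symmetrization
    (dia : ConvexBody (Euc 2) → ConvexBody (Euc 2))
    (hcod : ∀ K, (dia K : Set (Euc 2)) = -(dia K : Set (Euc 2)))
    (hmono : ∀ K L : ConvexBody (Euc 2),
      (K : Set (Euc 2)) ⊆ (L : Set (Euc 2)) → (dia K : Set (Euc 2)) ⊆ (dia L : Set (Euc 2)))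
    (hW : ∀ K : ConvexBody (Euc 2),
      meanWidth (dia K : Set (Euc 2)) = meanWidth (K : Set (Euc 2)))
    (hinv : ∀ K : ConvexBody (Euc 2), (K : Set (Euc 2)) = -(K : Set (Euc 2)) → dia K = K)
    (hsegmap : ∀ (K : ConvexBody (Euc 2)) (a b : Euc 2), (K : Set (Euc 2)) = segment ℝ a b →
      ∃ c d : Euc 2, (dia K : Set (Euc 2)) = segment ℝ c d)
    {K : ConvexBody (Euc 2)} {c x d : Euc 2}
    (hK : (K : Set (Euc 2)) = (fun y => x + y) '' segment ℝ (-c) c)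
    (hd : (dia K : Set (Euc 2)) = segment ℝ (-d) d) {r : ℝ} (hr : 1 ≤ r) :
    ∃ s : ℝ, r * ‖c‖ * ‖d - s • c‖ ≤ ‖d‖ * ‖x‖ := by
  set Kr := segmentBody (x + -(r • c)) (x + r • c)
  set Mr := segmentBody (-(r • c)) (r • c) + segmentBody (-x) x
  have hKr : (Kr : Set (Euc 2)) = (fun y => x + y) '' segment ℝ (-(r • c)) (r • c) := by
    rw [coe_segmentBody, segment_translate_image]
  have hMr : (Mr : Set (Euc 2)) = segment ℝ (-(r • c)) (r • c) + segment ℝ (-x) x := by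
    rw [ConvexBody.coe_add, coe_segmentBody, coe_segmentBody]
  obtain ⟨e, he, hec⟩ := exists_symmetrization_eq_segment_neg dia hcod hW hsegmap hKr
  have hKKr : (K : Set (Euc 2)) ⊆ Kr := by
    rw [hK, hKr]
    exact image_mono (segment_neg_subset_segment_neg_smul hr c)
  have hKrMr : (Kr : Set (Euc 2)) ⊆ Mr := by
    rw [hKr, hMr]
    rintro _ ⟨y, hy, rfl⟩
    simpa only [add_comm x y] using add_mem_add hy (right_mem_segment ℝ _ _)
  have hMr_fixed : dia Mr = Mr := hinv Mr (by rw [hMr, neg_add, neg_segment_neg, neg_segment_neg])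
  have hde : d ∈ segment ℝ (-e) e := he ▸ hmono K Kr hKKr (hd ▸ right_mem_segment ℝ _ _)
  have heMr : e ∈ segment ℝ (-(r • c)) (r • c) + segment ℝ (-x) x :=
    hMr ▸ hMr_fixed ▸ hmono Kr Mr hKrMr (he ▸ right_mem_segment ℝ _ _)
  obtain ⟨s, hs⟩ := exists_norm_mul_norm_sub_smul_le hde heMr
  refine ⟨s * r, ?_⟩
  rwa [hec, norm_smul, Real.norm_eq_abs, abs_of_pos (zero_lt_one.trans_le hr), smul_smul] at hs

/-- key step in Theorem 3: if `◇ : 𝒦² → 𝒦²_{o}` is a monotonic, mean-width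
preserving symmetrization into `o`-symmetric sets, invariant on `o`-symmetric sets, which
maps line segments to line segments, then `◇(J + x) = J` for every `o`-symmetric segment `J`
and every `x ∈ ℝ²`. -/
theorem stmt13 (dia : ConvexBody (Euc 2) → ConvexBody (Euc 2))
    (hcod : ∀ K, (dia K : Set (Euc 2)) = -(dia K : Set (Euc 2)))
    (hmono : ∀ K L : ConvexBody (Euc 2),
      (K : Set (Euc 2)) ⊆ (L : Set (Euc 2)) → (dia K : Set (Euc 2)) ⊆ (dia L : Set (Euc 2)))
    (hW : ∀ K : ConvexBody (Euc 2),
      meanWidth (dia K : Set (Euc 2)) = meanWidth (K : Set (Euc 2)))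
    (hinv : ∀ K : ConvexBody (Euc 2), (K : Set (Euc 2)) = -(K : Set (Euc 2)) → dia K = K)
    (hsegmap : ∀ (K : ConvexBody (Euc 2)) (a b : Euc 2), (K : Set (Euc 2)) = segment ℝ a b →
      ∃ c d : Euc 2, (dia K : Set (Euc 2)) = segment ℝ c d) :
    ∀ (K : ConvexBody (Euc 2)) (c x : Euc 2),
      (K : Set (Euc 2)) = (fun y => x + y) '' segment ℝ (-c) c →
      (dia K : Set (Euc 2)) = segment ℝ (-c) c := by
  intro K c x hK
  obtain ⟨d, hd, hdc⟩ := exists_symmetrization_eq_segment_neg dia hcod hW hsegmap hK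
  rw [hd]
  rcases eq_or_ne c 0 with rfl | hc
  · rw [norm_zero, norm_eq_zero] at hdc
    rw [hdc]
  refine segment_neg_eq_of_mem_span_singleton
    (mem_span_singleton_of_forall_mul_norm_sub_le ‖x‖ fun r hr => ?_) hdc
  obtain ⟨s, hs⟩ :=
    exists_mul_norm_sub_smul_le_of_symmetrization dia hcod hmono hW hinv hsegmap hK hd hr
  refine ⟨s, le_of_mul_le_mul_left ?_ (norm_pos_iff.2 hc)⟩
  rw [hdc] at hs
  linarith
end
end

section
/- There exists a strictly monotonic symmetrization ◇ : 𝒦ⁿₙ → 𝒦ⁿ_{n,{o}} whose natural extension ◇̄ (defined by ◇̄K = ⋂_{m≥1} ◇(K + (1/m)B)) does not agree with ◇ on 𝒦ⁿₙ. Concretely, defining ◇K = B_K if V_n(K) ≤ 1 and ◇K = 2B_K if V_n(K) > 1, where B_K is the origin-centered Euclidean ball with V_n(B_K) = V_n(K), the map ◇ is strictly monotonic but ◇̄K = 2◇K ≠ ◇K whenever V_n(K) = 1. -/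
open Set MeasureTheory Metric Pointwise

noncomputable section

/-!
Volume is strictly monotone on convex bodies, and the factor in front of `B_K` jumps from `1`
to `2` only upwards, so `◇` is strictly monotone. If `V(K) = 1`, each `K + (1/m)B` strictly
contains `K`, hence has volume `> 1` and is sent to `2 B_{K + (1/m)B}`. The volumes of the
`K + (1/m)B` decrease to `V(K)`, so the radii of these balls decrease to twice the radius of
`B_K`, and the intersection is `2 B_K = 2 ◇K`.
-/

open Filter Topology Module ENNReal

section NormedSpace

variable {E : Type*} [NormedAddCommGroup E] [NormedSpace ℝ E]

lemma closedBall_zero_ssubset_closedBall_zero [Nontrivial E] {a b : ℝ} (hb : 0 ≤ b)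
    (hab : a < b) : closedBall (0 : E) a ⊂ closedBall (0 : E) b := by
  obtain ⟨x, hx⟩ := exists_norm_eq E hb
  rw [ssubset_iff_of_subset (closedBall_subset_closedBall hab.le)]
  exact ⟨x, by simp [hx], by simp [hx, hab]⟩

/-- A point of `L \ K` is a limit of interior points of `L`, so the open set
`Kᶜ ∩ interior L` is nonempty. -/
lemma measure_lt_measure_of_ssubset [MeasurableSpace E] [OpensMeasurableSpace E]
    (μ : Measure E) [μ.IsOpenPosMeasure] {K L : Set E} (hK : IsClosed K) (hKμ : μ K ≠ ∞)
    (hL : Convex ℝ L) (hLi : (interior L).Nonempty) (hKL : K ⊂ L) : μ K < μ L := by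
  obtain ⟨x, hxL, hxK⟩ := exists_of_ssubset hKL
  have hx : x ∈ closure (interior L) := by
    rw [hL.closure_interior_eq_closure_of_nonempty_interior hLi]
    exact subset_closure hxL
  have hU : (Kᶜ ∩ interior L).Nonempty := mem_closure_iff.1 hx Kᶜ hK.isOpen_compl hxK
  have hUopen : IsOpen (Kᶜ ∩ interior L) := hK.isOpen_compl.inter isOpen_interior
  calc μ K < μ K + μ (Kᶜ ∩ interior L) :=
        ENNReal.lt_add_right hKμ (hUopen.measure_ne_zero μ hU)
    _ = μ (K ∪ (Kᶜ ∩ interior L)) :=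
      (measure_union (disjoint_compl_right.mono_right inter_subset_left)
        hUopen.measurableSet).symm
    _ ≤ μ L := measure_mono (union_subset hKL.subset (inter_subset_right.trans interior_subset))

end NormedSpace

lemma tendsto_measure_add_closedBall {E : Type*} [NormedAddCommGroup E] [ProperSpace E]
    [MeasurableSpace E] [OpensMeasurableSpace E] (μ : Measure E) [IsFiniteMeasureOnCompacts μ]
    {K : Set E} (hK : IsCompact K) :
    Tendsto (fun m : ℕ => μ (K + closedBall 0 (1 / (m + 1)))) atTop (𝓝 (μ K)) := by
  have hδ : ∀ m : ℕ, K + closedBall (0 : E) (1 / (m + 1)) = cthickening (1 / (m + 1)) K :=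
    fun m => by rw [hK.add_closedBall (by positivity), zero_vadd]
  simp only [hδ]
  exact (tendsto_measure_cthickening_of_isCompact hK).comp tendsto_one_div_add_atTop_nhds_zero_nat

/-- A maximiser `x` of `⟪e, ·⟫` on `K`, with `‖e‖ = δ`, gives `x + e ∉ K`. -/
lemma ssubset_add_closedBall {E : Type*} [NormedAddCommGroup E] [InnerProductSpace ℝ E]
    [Nontrivial E] {K : Set E} (hK : IsCompact K) (hne : K.Nonempty) {δ : ℝ} (hδ : 0 < δ) :
    K ⊂ K + closedBall 0 δ := by
  obtain ⟨e, he⟩ := exists_norm_eq E hδ.le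
  obtain ⟨x, hxK, hmax⟩ := hK.exists_isMaxOn hne (f := fun y => inner ℝ e y)
    (continuous_const.inner continuous_id).continuousOn
  have hsub : K ⊆ K + closedBall 0 δ := fun y hy =>
    ⟨y, hy, 0, mem_closedBall_self hδ.le, add_zero y⟩
  rw [ssubset_iff_of_subset hsub]
  refine ⟨x + e, add_mem_add hxK (mem_closedBall_zero_iff.2 he.le), fun hxe => ?_⟩
  have : inner ℝ e (x + e) ≤ inner ℝ e x := hmax hxe
  rw [inner_add_right, real_inner_self_eq_norm_sq, he] at this
  nlinarith

lemma iInter_closedBall_of_tendsto {α ι : Type*} [PseudoMetricSpace α] {l : Filter ι} [l.NeBot]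
    (x : α) {r : ι → ℝ} {r₀ : ℝ} (hle : ∀ i, r₀ ≤ r i) (hr : Tendsto r l (𝓝 r₀)) :
    ⋂ i, closedBall x (r i) = closedBall x r₀ := by
  ext y
  simp only [mem_iInter, mem_closedBall]
  exact ⟨ge_of_tendsto' hr, fun h i => h.trans (hle i)⟩

section EqVolRadius

variable {E : Type*} [NormedAddCommGroup E] [NormedSpace ℝ E] [MeasurableSpace E] (μ : Measure E)

/-- `μ (closedBall 0 r) = r ^ finrank ℝ E * μ (ball 0 1)`, solved for `r`. -/
def eqVolRadius (v : ℝ≥0∞) : ℝ := (v / μ (ball 0 1)).toReal ^ (finrank ℝ E : ℝ)⁻¹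

lemma eqVolRadius_nonneg (v : ℝ≥0∞) : 0 ≤ eqVolRadius μ v :=
  Real.rpow_nonneg ENNReal.toReal_nonneg _

def diamondRadius (v : ℝ≥0∞) : ℝ :=
  if v ≤ 1 then eqVolRadius μ v else 2 * eqVolRadius μ v

lemma diamondRadius_nonneg (v : ℝ≥0∞) : 0 ≤ diamondRadius μ v := by
  unfold diamondRadius
  split_ifs <;> linarith [eqVolRadius_nonneg μ v]

variable [μ.IsAddHaarMeasure]

lemma continuousAt_eqVolRadius {v : ℝ≥0∞} (hv : v ≠ ∞) :
    ContinuousAt (eqVolRadius μ) v := by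
  have hball : μ (ball 0 1) ≠ 0 := (measure_ball_pos μ 0 one_pos).ne'
  exact (Real.continuousAt_rpow_const _ _ (Or.inr (by positivity))).comp
    ((ENNReal.tendsto_toReal (ENNReal.div_lt_top hv hball).ne).comp
      (ENNReal.continuous_div_const _ hball).continuousAt)

variable [FiniteDimensional ℝ E] [BorelSpace E] [Nontrivial E]

lemma measure_closedBall_eqVolRadius {v : ℝ≥0∞} (hv : v ≠ ∞) :
    μ (closedBall 0 (eqVolRadius μ v)) = v := by
  have hball : μ (ball 0 1) ≠ 0 := (measure_ball_pos μ 0 one_pos).ne'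
  rw [Measure.addHaar_closedBall μ 0 (eqVolRadius_nonneg μ v), eqVolRadius,
    Real.rpow_inv_natCast_pow ENNReal.toReal_nonneg finrank_pos.ne',
    ENNReal.ofReal_toReal (ENNReal.div_lt_top hv hball).ne,
    ENNReal.div_mul_cancel hball measure_ball_lt_top.ne]

lemma eqVolRadius_pos {v : ℝ≥0∞} (h0 : v ≠ 0) (hv : v ≠ ∞) : 0 < eqVolRadius μ v := by
  refine (eqVolRadius_nonneg μ v).lt_of_ne fun h => h0 ?_
  rw [← measure_closedBall_eqVolRadius μ hv, ← h, closedBall_zero, measure_singleton]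

lemma strictMonoOn_measure_closedBall :
    StrictMonoOn (fun r => μ (closedBall (0 : E) r)) (Ici 0) :=
  fun _ ha _ _ hab => measure_lt_measure_of_ssubset μ isClosed_closedBall
    measure_closedBall_lt_top.ne (convex_closedBall _ _)
    ⟨0, ball_subset_interior_closedBall (mem_ball_self ((mem_Ici.1 ha).trans_lt hab))⟩
    (closedBall_zero_ssubset_closedBall_zero (ha.trans hab.le) hab)

lemma eqVolRadius_lt_eqVolRadius {v w : ℝ≥0∞} (hvw : v < w) (hw : w ≠ ∞) :
    eqVolRadius μ v < eqVolRadius μ w := by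
  rw [← (strictMonoOn_measure_closedBall μ).lt_iff_lt (eqVolRadius_nonneg μ v)
    (eqVolRadius_nonneg μ w)]
  simpa only [measure_closedBall_eqVolRadius μ hw,
    measure_closedBall_eqVolRadius μ (hvw.trans hw.lt_top).ne]

lemma diamondRadius_pos {v : ℝ≥0∞} (h0 : v ≠ 0) (hv : v ≠ ∞) :
    0 < diamondRadius μ v := by
  unfold diamondRadius
  split_ifs <;> linarith [eqVolRadius_pos μ h0 hv]

lemma diamondRadius_lt_diamondRadius {v w : ℝ≥0∞} (hvw : v < w) (hw : w ≠ ∞) :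
    diamondRadius μ v < diamondRadius μ w := by
  have hr := eqVolRadius_lt_eqVolRadius μ hvw hw
  have hr₀ := eqVolRadius_nonneg μ w
  unfold diamondRadius
  split_ifs with hv hw' hw' <;> first | linarith | exact absurd (hvw.le.trans hw') hv

end EqVolRadius

section Diamond

variable {E : Type*} [NormedAddCommGroup E] [InnerProductSpace ℝ E] [FiniteDimensional ℝ E]
  [MeasurableSpace E] (μ : Measure E)

def diamond (K : ConvexBody E) : ConvexBody E where
  carrier := closedBall 0 (diamondRadius μ (μ K))
  convex' := convex_closedBall _ _
  isCompact' := isCompact_closedBall _ _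
  nonempty' := nonempty_closedBall.2 (diamondRadius_nonneg μ _)

lemma coe_diamond (K : ConvexBody E) :
    (diamond μ K : Set E) = closedBall 0 (diamondRadius μ (μ K)) := rfl

variable [BorelSpace E] [μ.IsAddHaarMeasure] [Nontrivial E]

lemma diamond_ssubset_diamond {K L : ConvexBody E} (hL : (interior (L : Set E)).Nonempty)
    (hKL : (K : Set E) ⊂ L) : (diamond μ K : Set E) ⊂ diamond μ L := by
  have hμ : μ K < μ L := measure_lt_measure_of_ssubset μ K.isCompact.isClosed
    K.isCompact.measure_lt_top.ne L.convex hL hKL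
  exact closedBall_zero_ssubset_closedBall_zero (diamondRadius_nonneg μ _)
    (diamondRadius_lt_diamondRadius μ hμ L.isCompact.measure_lt_top.ne)

lemma iInter_diamond_add_closedBall {K : ConvexBody E} (hK : (interior (K : Set E)).Nonempty)
    (hK1 : μ K = 1) {Km : ℕ → ConvexBody E}
    (hKm : ∀ m : ℕ, (Km m : Set E) = (K : Set E) + closedBall 0 (1 / (m + 1))) :
    ⋂ m, (diamond μ (Km m) : Set E) = closedBall 0 (2 * eqVolRadius μ 1) := by
  have hK_Km : ∀ m, (K : Set E) ⊂ Km m := fun m =>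
    hKm m ▸ ssubset_add_closedBall K.isCompact K.nonempty (by positivity)
  have hgt : ∀ m, 1 < μ (Km m) := fun m =>
    hK1 ▸ measure_lt_measure_of_ssubset μ K.isCompact.isClosed K.isCompact.measure_lt_top.ne
      (Km m).convex (hK.mono (interior_mono (hK_Km m).subset)) (hK_Km m)
  have hlim : Tendsto (fun m => μ (Km m)) atTop (𝓝 1) := by
    simpa only [hKm, hK1] using tendsto_measure_add_closedBall μ K.isCompact
  have hdiamond : ∀ m, diamondRadius μ (μ (Km m)) = 2 * eqVolRadius μ (μ (Km m)) :=
    fun m => if_neg (not_le.2 (hgt m))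
  simp only [coe_diamond, hdiamond]
  refine iInter_closedBall_of_tendsto 0 (fun m => ?_)
    (((continuousAt_eqVolRadius μ one_ne_top).tendsto.comp hlim).const_mul 2)
  linarith [eqVolRadius_lt_eqVolRadius μ (hgt m) (Km m).isCompact.measure_lt_top.ne]

end Diamond

/-- there is a strictly monotonic symmetrization `◇ : 𝒦ⁿₙ → 𝒦ⁿ_{n,{o}}`
(namely `◇K = B_K` if `V_n(K) ≤ 1` and `◇K = 2B_K` otherwise, where `B_K` is the centered
ball of the same volume as `K`) whose natural extension `◇̄K = ⋂_m ◇(K + (1/m)B)` satisfies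
`◇̄K = 2◇K ≠ ◇K` whenever `V_n(K) = 1`. -/
theorem stmt18 {n : ℕ} (hn : 1 ≤ n) :
    ∃ dia : FullBody n → ConvexBody (Euc n),
      (∀ K, (dia K : Set (Euc n)) = -(dia K : Set (Euc n)) ∧
        (interior (dia K : Set (Euc n))).Nonempty) ∧
      (∀ K L : FullBody n, (K.1 : Set (Euc n)) ⊂ (L.1 : Set (Euc n)) →
        (dia K : Set (Euc n)) ⊂ (dia L : Set (Euc n))) ∧
      (∀ K : FullBody n, ∃ r : ℝ, 0 < r ∧
        volume (closedBall (0 : Euc n) r) = volume (K.1 : Set (Euc n)) ∧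
        (volume (K.1 : Set (Euc n)) ≤ 1 →
          (dia K : Set (Euc n)) = closedBall (0 : Euc n) r) ∧
        (1 < volume (K.1 : Set (Euc n)) →
          (dia K : Set (Euc n)) = closedBall (0 : Euc n) (2 * r))) ∧
      (∀ K : FullBody n, volume (K.1 : Set (Euc n)) = 1 →
        ∀ Km : ℕ → FullBody n,
          (∀ m : ℕ, ((Km m).1 : Set (Euc n))
            = (K.1 : Set (Euc n)) + closedBall (0 : Euc n) (1 / (m + 1))) →
          (⋂ m : ℕ, (dia (Km m) : Set (Euc n))) = (2 : ℝ) • (dia K : Set (Euc n)) ∧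
          (2 : ℝ) • (dia K : Set (Euc n)) ≠ (dia K : Set (Euc n))) := by
  have : Nonempty (Fin n) := ⟨⟨0, hn⟩⟩
  have hμ0 : ∀ K : FullBody n, volume (K.1 : Set (Euc n)) ≠ 0 := fun K =>
    (volume.measure_pos_of_nonempty_interior K.2).ne'
  have hμ_top : ∀ K : FullBody n, volume (K.1 : Set (Euc n)) ≠ ∞ := fun K =>
    K.1.isCompact.measure_lt_top.ne
  refine ⟨fun K => diamond volume K.1, fun K => ⟨?_, ?_⟩,
    fun K L hKL => diamond_ssubset_diamond volume L.2 hKL, fun K => ?_, fun K hK1 Km hKm => ?_⟩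
  · rw [coe_diamond, neg_closedBall, neg_zero]
  · exact ⟨0, ball_subset_interior_closedBall
      (mem_ball_self (diamondRadius_pos volume (hμ0 K) (hμ_top K)))⟩
  · refine ⟨eqVolRadius volume (volume (K.1 : Set (Euc n))),
      eqVolRadius_pos volume (hμ0 K) (hμ_top K),
      measure_closedBall_eqVolRadius volume (hμ_top K),
      fun h => by rw [coe_diamond, diamondRadius, if_pos h],
      fun h => by rw [coe_diamond, diamondRadius, if_neg (not_le.2 h)]⟩
  · have hr := eqVolRadius_pos (volume : Measure (Euc n)) one_ne_zero one_ne_top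
    have hK : (diamond volume K.1 : Set (Euc n)) =
        closedBall 0 (eqVolRadius (volume : Measure (Euc n)) 1) := by
      rw [coe_diamond, diamondRadius, if_pos hK1.le, hK1]
    rw [iInter_diamond_add_closedBall volume K.2 hK1 hKm, hK, smul_closedBall _ _ hr.le,
      smul_zero, Real.norm_two]
    exact ⟨rfl, (closedBall_zero_ssubset_closedBall_zero (by positivity) (by linarith)).ne'⟩
end
end
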